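/- Let H be a graph on vertex set [k], let W be a minimum vertex cover of H, let U₁ ⊆ [k] ∖ W be a maximal (with respect to inclusion) subset admitting a matching in H between U₁ and W covering U₁, and let U₂ ⊆ [k] ∖ (W ∪ U₁) be a maximal subset admitting a matching in H between U₂ and W covering U₂. Then every minimum vertex cover of H[W ∪ U₁ ∪ U₂] is a vertex cover of H. -/

import Mathlib

open Finset
open scoped Classical

namespace CliqueSA

variable {k : ℕ}

/-- `C` is a vertex cover of the graph `H` on `[k]`. -/
def IsVC (H : SimpleGraph (Fin k)) (C : Finset (Fin k)) : Prop :=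
  ∀ ⦃u v : Fin k⦄, H.Adj u v → u ∈ C ∨ v ∈ C

/-- Minimum vertex cover size of a graph on `[k]`. -/
noncomputable def vc (H : SimpleGraph (Fin k)) : ℕ :=
  sInf {m | ∃ C : Finset (Fin k), IsVC H C ∧ C.card = m}

/-- The edges of a graph on `[k]` as a `Finset`. -/
noncomputable def edgeF (H : SimpleGraph (Fin k)) : Finset (Sym2 (Fin k)) :=
  Finset.univ.filter (fun e => e ∈ H.edgeSet)

/-- Restriction of `H` to the vertex subset `B` (vertex-induced subgraph, on the vertex set `[k]`). -/
def restrict (H : SimpleGraph (Fin k)) (B : Finset (Fin k)) : SimpleGraph (Fin k) where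
  Adj u v := H.Adj u v ∧ u ∈ B ∧ v ∈ B
  symm := ⟨by intro u v h; exact ⟨h.1.symm, h.2.2, h.2.1⟩⟩
  loopless := ⟨by intro u h; exact H.loopless.irrefl u h.1⟩

/-- The non-isolated vertices `V(E(H))` of a graph on `[k]`. -/
noncomputable def suppF (H : SimpleGraph (Fin k)) : Finset (Fin k) :=
  Finset.univ.filter (fun v => v ∈ H.support)

/-- `W` is a minimum vertex cover of `H`. -/
def IsMinVC (H : SimpleGraph (Fin k)) (W : Finset (Fin k)) : Prop :=
  IsVC H W ∧ W.card = vc H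

/-- There is a matching in `H` from `U` into `W` covering all of `U`. -/
def MatchableInto (H : SimpleGraph (Fin k)) (U W : Finset (Fin k)) : Prop :=
  ∃ f : Fin k → Fin k, Set.InjOn f ↑U ∧ ∀ u ∈ U, f u ∈ W ∧ H.Adj u (f u)

/-- `U ⊆ Avail` is maximal (w.r.t. inclusion) with a matching in `H` from `U` into `W`
covering `U`. -/
def MaximalMatched (H : SimpleGraph (Fin k)) (W Avail U : Finset (Fin k)) : Prop :=
  U ⊆ Avail ∧ MatchableInto H U W ∧
    ∀ U', U ⊂ U' → U' ⊆ Avail → ¬ MatchableInto H U' W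

/-- `F` is a core of `H`: a vertex-induced subgraph such that every minimum vertex cover of `F`
is a vertex cover of `H`. -/
def IsCore (F H : SimpleGraph (Fin k)) : Prop :=
  (∃ S : Finset (Fin k), F = restrict H S) ∧
    ∀ C : Finset (Fin k), IsVC F C → C.card = vc F → IsVC H C

/-- `H` is in the `(i,e)`-boundary: `vc(H) = i` and `vc(H ∪ {e}) = i + 1`. -/
def InBoundary (i : ℕ) (H : SimpleGraph (Fin k)) (e : Sym2 (Fin k)) : Prop :=
  vc H = i ∧ vc (H ⊔ SimpleGraph.fromEdgeSet {e}) = i + 1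

end CliqueSA

/-!
Suppose an edge `uv` of `H` with `v ∈ W` is missed by a minimum vertex cover `C` of
`H[B]`, `B = W ∪ U₁ ∪ U₂`; then `u ∉ B`. By maximality neither `U₁ + u` nor `U₂ + u` can be
matched into `W`, so Hall's theorem yields `Tᵢ ⊆ Uᵢ` whose matched partners `Nᵢ ⊆ W` contain
all neighbours of `Tᵢ + u`. Each matching edge `a – fᵢ a` is covered by `C`, so
`|Nᵢ \ C| ≤ |Tᵢ ∩ C|`, and since `v ∈ (N₁ ∩ N₂) \ C` while `T₁, T₂` are disjoint,
`|(N₁ ∪ N₂) \ C| < |(T₁ ∪ T₂) ∩ C|`. Exchanging `(T₁ ∪ T₂) ∩ C` for `(N₁ ∪ N₂) \ C` gives a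
smaller vertex cover of `H[B]`.
-/

namespace CliqueSA

variable {k : ℕ}

noncomputable def nbrsIn (H : SimpleGraph (Fin k)) (W : Finset (Fin k)) (x : Fin k) :
    Finset (Fin k) :=
  W.filter (H.Adj x)

lemma exists_card_biUnion_nbrsIn_lt {H : SimpleGraph (Fin k)} {S W : Finset (Fin k)}
    (hS : ¬ MatchableInto H S W) : ∃ s ⊆ S, #(s.biUnion (nbrsIn H W)) < #s := by
  by_contra! hall
  obtain ⟨g, hg, hgW⟩ := (all_card_le_biUnion_card_iff_exists_injective
    fun x : S => nbrsIn H W x).1 fun s => by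
      simpa [card_image_of_injective _ Subtype.val_injective, image_biUnion] using
        hall (s.image Subtype.val) fun _ hx => by
          obtain ⟨y, -, rfl⟩ := mem_image.1 hx
          exact y.2
  refine hS ⟨fun x => if hx : x ∈ S then g ⟨x, hx⟩ else x, fun x hx y hy hxy => ?_, fun x hx => ?_⟩
  · simpa [dif_pos (mem_coe.1 hx), dif_pos (mem_coe.1 hy), hg.eq_iff] using hxy
  · simpa [dif_pos hx, nbrsIn] using hgW ⟨x, hx⟩

lemma exists_tight_of_not_matchableInto_insert {H : SimpleGraph (Fin k)} {U W : Finset (Fin k)}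
    {u : Fin k} {f : Fin k → Fin k} (hf : Set.InjOn f U)
    (hfU : ∀ a ∈ U, f a ∈ W ∧ H.Adj a (f a)) (hu : ¬ MatchableInto H (insert u U) W) :
    ∃ T ⊆ U, ∀ x ∈ insert u T, nbrsIn H W x ⊆ T.image f := by
  obtain ⟨s, hsU, hs⟩ := exists_card_biUnion_nbrsIn_lt hu
  have himage : ∀ T ⊆ s, T ⊆ U → T.image f ⊆ s.biUnion (nbrsIn H W) := fun T hTs hTU =>
    image_subset_iff.2 fun a ha =>
      mem_biUnion.2 ⟨a, hTs ha, mem_filter.2 (hfU a (hTU ha))⟩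
  have hcard : ∀ T ⊆ U, #(T.image f) = #T := fun T hTU =>
    card_image_of_injOn (hf.mono (coe_subset.2 hTU))
  have hus : u ∈ s := by
    by_contra hus
    have hsU' := (subset_insert_iff_of_notMem hus).1 hsU
    have := card_le_card (himage s subset_rfl hsU')
    rw [hcard s hsU'] at this
    omega
  have hTU : s.erase u ⊆ U := subset_insert_iff.1 hsU
  have htight : (s.erase u).image f = s.biUnion (nbrsIn H W) :=
    eq_of_subset_of_card_le (himage _ (erase_subset u s) hTU)
      (by rw [hcard _ hTU, card_erase_of_mem hus]; omega)
  refine ⟨s.erase u, hTU, fun x hx => ?_⟩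
  rw [insert_erase hus] at hx
  rw [htight]
  exact subset_biUnion_of_mem _ hx

lemma MaximalMatched.exists_tight {H : SimpleGraph (Fin k)} {W A U : Finset (Fin k)}
    (hU : MaximalMatched H W A U) (hW : IsVC H W) (hAW : Disjoint A W) {u : Fin k} (hu : u ∈ A)
    (huU : u ∉ U) :
    ∃ T ⊆ U, ∃ f : Fin k → Fin k, (∀ a ∈ T, f a ∈ W ∧ H.Adj a (f a)) ∧
      ∀ x ∈ insert u T, ∀ y, H.Adj x y → y ∈ T.image f := by
  obtain ⟨hUA, ⟨f, hf, hfU⟩, hmax⟩ := hU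
  obtain ⟨T, hTU, htight⟩ := exists_tight_of_not_matchableInto_insert hf hfU
    (hmax _ (ssubset_insert huU) (insert_subset hu hUA))
  refine ⟨T, hTU, f, fun a ha => hfU a (hTU ha), fun x hx y hxy => htight x hx ?_⟩
  have hxA : x ∈ A := insert_subset hu (hTU.trans hUA) hx
  exact mem_filter.2 ⟨(hW hxy).resolve_left (disjoint_left.1 hAW hxA), hxy⟩

lemma vc_le_card {G : SimpleGraph (Fin k)} {C : Finset (Fin k)} (hC : IsVC G C) : vc G ≤ #C :=
  Nat.sInf_le ⟨C, hC, rfl⟩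

lemma vc_lt_card_of_exchange {G : SimpleGraph (Fin k)} {C T N : Finset (Fin k)} (hC : IsVC G C)
    (hTN : Disjoint T N) (hnbr : ∀ x ∈ T, ∀ y, G.Adj x y → y ∈ N) (hlt : #(N \ C) < #(C ∩ T)) :
    vc G < #C := by
  have hcov : ∀ x y, G.Adj x y → x ∈ C → x ∈ C \ T ∪ N \ C ∨ y ∈ C \ T ∪ N \ C := by
    intro x y hxy hxC
    by_cases hxT : x ∈ T
    · have hyN := hnbr x hxT y hxy
      by_cases hyC : y ∈ C
      · exact .inr (mem_union_left _ (mem_sdiff.2 ⟨hyC, disjoint_right.1 hTN hyN⟩))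
      · exact .inr (mem_union_right _ (mem_sdiff.2 ⟨hyN, hyC⟩))
    · exact .inl (mem_union_left _ (mem_sdiff.2 ⟨hxC, hxT⟩))
  have hC' : IsVC G (C \ T ∪ N \ C) := fun x y hxy =>
    (hC hxy).elim (hcov x y hxy) fun hyC => (hcov y x hxy.symm hyC).symm
  calc vc G ≤ #(C \ T ∪ N \ C) := vc_le_card hC'
    _ ≤ #(C \ T) + #(N \ C) := card_union_le _ _
    _ < #(C \ T) + #(C ∩ T) := by omega
    _ = #C := card_sdiff_add_card_inter C T

lemma card_image_sdiff_le {G : SimpleGraph (Fin k)} {C T : Finset (Fin k)} {f : Fin k → Fin k}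
    (hC : IsVC G C) (hf : ∀ a ∈ T, G.Adj a (f a)) : #(T.image f \ C) ≤ #(C ∩ T) := by
  have hsub : T.image f \ C ⊆ (C ∩ T).image f := by
    intro w hw
    obtain ⟨⟨a, ha, rfl⟩, hwC⟩ := And.imp_left mem_image.1 (mem_sdiff.1 hw)
    exact mem_image_of_mem f (mem_inter.2 ⟨(hC (hf a ha)).resolve_right hwC, ha⟩)
  exact (card_le_card hsub).trans card_image_le

lemma card_union_image_sdiff_lt {G : SimpleGraph (Fin k)} {C T₁ T₂ : Finset (Fin k)}
    {f₁ f₂ : Fin k → Fin k} {v : Fin k} (hC : IsVC G C) (hT : Disjoint T₁ T₂)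
    (hf₁ : ∀ a ∈ T₁, G.Adj a (f₁ a)) (hf₂ : ∀ a ∈ T₂, G.Adj a (f₂ a))
    (hv₁ : v ∈ T₁.image f₁) (hv₂ : v ∈ T₂.image f₂) (hvC : v ∉ C) :
    #((T₁.image f₁ ∪ T₂.image f₂) \ C) < #(C ∩ (T₁ ∪ T₂)) := by
  have hv : 0 < #(T₁.image f₁ \ C ∩ (T₂.image f₂ \ C)) :=
    card_pos.2 ⟨v, by simp [hv₁, hv₂, hvC]⟩
  have hdisj : Disjoint (C ∩ T₁) (C ∩ T₂) :=
    hT.mono inter_subset_right inter_subset_right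
  have h₁ := card_image_sdiff_le hC hf₁
  have h₂ := card_image_sdiff_le hC hf₂
  have := card_union_add_card_inter (T₁.image f₁ \ C) (T₂.image f₂ \ C)
  rw [union_sdiff_distrib, inter_union_distrib_left, card_union_of_disjoint hdisj]
  omega

lemma vc_lt_card_of_tight_pair {G : SimpleGraph (Fin k)} {C W T₁ T₂ : Finset (Fin k)}
    {f₁ f₂ : Fin k → Fin k} {v : Fin k} (hC : IsVC G C) (hT : Disjoint T₁ T₂)
    (hTW : Disjoint (T₁ ∪ T₂) W)
    (hf₁ : ∀ a ∈ T₁, f₁ a ∈ W ∧ G.Adj a (f₁ a)) (hf₂ : ∀ a ∈ T₂, f₂ a ∈ W ∧ G.Adj a (f₂ a))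
    (hcl₁ : ∀ x ∈ T₁, ∀ y, G.Adj x y → y ∈ T₁.image f₁)
    (hcl₂ : ∀ x ∈ T₂, ∀ y, G.Adj x y → y ∈ T₂.image f₂)
    (hv₁ : v ∈ T₁.image f₁) (hv₂ : v ∈ T₂.image f₂) (hvC : v ∉ C) : vc G < #C := by
  have hNW : T₁.image f₁ ∪ T₂.image f₂ ⊆ W :=
    union_subset (image_subset_iff.2 fun a ha => (hf₁ a ha).1)
      (image_subset_iff.2 fun a ha => (hf₂ a ha).1)
  refine vc_lt_card_of_exchange hC (hTW.mono_right hNW) (fun x hx y hxy => ?_)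
    (card_union_image_sdiff_lt hC hT (fun a ha => (hf₁ a ha).2) (fun a ha => (hf₂ a ha).2)
      hv₁ hv₂ hvC)
  rcases mem_union.1 hx with hx | hx
  · exact mem_union_left _ (hcl₁ x hx y hxy)
  · exact mem_union_right _ (hcl₂ x hx y hxy)

/-- Corollary `cor:vc-iff`: with `W` a minimum vertex cover of `H`, `U₁` a
maximal subset of `[k] ∖ W` matchable into `W`, and `U₂` a maximal subset of `[k] ∖ (W ∪ U₁)`
matchable into `W`, every minimum vertex cover of `H[W ∪ U₁ ∪ U₂]` is a vertex cover of `H`. -/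
theorem minVC_of_restriction_covers (k : ℕ) (H : SimpleGraph (Fin k)) (W U₁ U₂ : Finset (Fin k))
    (hW : IsMinVC H W)
    (hU₁ : MaximalMatched H W (Finset.univ \ W) U₁)
    (hU₂ : MaximalMatched H W (Finset.univ \ (W ∪ U₁)) U₂) :
    ∀ C : Finset (Fin k), IsVC (restrict H (W ∪ U₁ ∪ U₂)) C →
      C.card = vc (restrict H (W ∪ U₁ ∪ U₂)) → IsVC H C := by
  intro C hC hCmin u v huv
  wlog hvW : v ∈ W generalizing u v
  · exact (this huv.symm ((hW.1 huv).resolve_right hvW)).symm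
  by_contra! huvC
  have hWB : W ⊆ W ∪ U₁ ∪ U₂ := subset_union_left.trans subset_union_left
  have huB : u ∉ W ∪ U₁ ∪ U₂ := fun huB => by simpa [huvC] using hC ⟨huv, huB, hWB hvW⟩
  simp only [mem_union, not_or] at huB
  obtain ⟨T₁, hT₁, f₁, hf₁, hcl₁⟩ := hU₁.exists_tight hW.1 sdiff_disjoint (by simp [huB]) huB.1.2
  obtain ⟨T₂, hT₂, f₂, hf₂, hcl₂⟩ :=
    hU₂.exists_tight hW.1 (sdiff_disjoint.mono_right subset_union_left) (by simp [huB]) huB.2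
  have hT₁W : ∀ a ∈ T₁, a ∉ W := fun a ha => (mem_sdiff.1 (hU₁.1 (hT₁ ha))).2
  have hT₂W : ∀ a ∈ T₂, a ∉ W ∪ U₁ := fun a ha => (mem_sdiff.1 (hU₂.1 (hT₂ ha))).2
  have hT : Disjoint T₁ T₂ :=
    disjoint_left.2 fun a h₁ h₂ => hT₂W a h₂ (mem_union_right _ (hT₁ h₁))
  have hTW : Disjoint (T₁ ∪ T₂) W := disjoint_union_left.2
    ⟨disjoint_left.2 hT₁W, disjoint_left.2 fun a h haW => hT₂W a h (mem_union_left _ haW)⟩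
  exact (vc_lt_card_of_tight_pair hC hT hTW
    (fun a ha => ⟨(hf₁ a ha).1, (hf₁ a ha).2, by simp [hT₁ ha], hWB (hf₁ a ha).1⟩)
    (fun a ha => ⟨(hf₂ a ha).1, (hf₂ a ha).2, by simp [hT₂ ha], hWB (hf₂ a ha).1⟩)
    (fun x hx y hxy => hcl₁ x (mem_insert_of_mem hx) y hxy.1)
    (fun x hx y hxy => hcl₂ x (mem_insert_of_mem hx) y hxy.1)
    (hcl₁ u (mem_insert_self u T₁) v huv) (hcl₂ u (mem_insert_self u T₂) v huv)
    huvC.2).ne hCmin.symm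

end CliqueSA
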